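/- arXiv:1504.05365 — 4 statements merged into one kernel-verified Lean document; each statement's English description precedes it below -/
import Mathlib

section
/- Let a,b,A,B ∈ ℕ with b > 0, B > 0, gcd(a,b) = 1, and assume b > 1 or B ∤ A. Let h,k ∈ ℕ with k > 0 and gcd(h,k) = 1. Then the following are equivalent: (i) there exists n ≥ 1 such that (ζ_b^a ζ_k^{hA}; ζ_k^{hB})_n · (ζ_b^{−a} ζ_k^{h(B−A)}; ζ_k^{hB})_n = 0 (i.e., some denominator of the series g₃(ζ_b^a ζ_k^{hA}, ζ_k^{hB}) vanishes); (ii) b | k and gcd(k,B) | (ak/b + Ah). -/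
/-!
With `x = ζ_b^a ζ_k^{hA}` and `q = ζ_k^{hB}` the second base is `q / x`, and `(q/x) q^j = 1` iff
`x q^{-(j+1)} = 1`. So a denominator vanishes iff `x q^m = 1` for some `m : ℤ`, i.e.
`a/b + h(A + mB)/k ∈ ℤ`. Clearing denominators forces `b ∣ k` (as `gcd(a,b) = 1`); the condition
then asks that `ak/b + hA + m hB ≡ 0 (mod k)` be solvable in `m`, which by Bézout and
`gcd(h,k) = 1` means `gcd(k,B) ∣ ak/b + Ah`.
-/

open Complex Filter Finset

/-- `e2pi r = e^{2 π i r}`; thus `ζ_k^h = e2pi (h/k)`. -/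
noncomputable def e2pi (r : ℝ) : ℂ := Complex.exp (2 * Real.pi * Complex.I * r)

/-- The finite q-Pochhammer symbol `(a;q)_n = ∏_{j=0}^{n-1} (1 - a q^j)`. -/
noncomputable def qPoch (a q : ℂ) (n : ℕ) : ℂ := ∏ j ∈ Finset.range n, (1 - a * q ^ j)

/-- The infinite q-Pochhammer symbol `(a;q)_∞ = ∏_{j=0}^{∞} (1 - a q^j)`. -/
noncomputable def qPochInf (a q : ℂ) : ℂ := ∏' j : ℕ, (1 - a * q ^ j)

/-- The Jacobi triple product `j(x,q) = (x;q)_∞ (q/x;q)_∞ (q;q)_∞`. -/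
noncomputable def jac (x q : ℂ) : ℂ := qPochInf x q * qPochInf (q / x) q * qPochInf q q

/-- The universal mock theta function
`g₃(x,q) = ∑_{n≥1} q^{n(n-1)} / ((x;q)_n (q/x;q)_n)` (indexed here by `n+1`, `n : ℕ`). -/
noncomputable def g₃ (x q : ℂ) : ℂ :=
  ∑' n : ℕ, q ^ (n * (n + 1)) / (qPoch x q (n + 1) * qPoch (q / x) q (n + 1))

/-- `qrad h k t = ζ_k^h e^{-t}`. -/
noncomputable def qrad (h k : ℕ) (t : ℝ) : ℂ := e2pi ((h : ℝ) / k) * Real.exp (-t)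

/-- `srad h k B t = e^{π i h B / k} e^{-tB/2}`, a square root of `(qrad h k t)^B`. -/
noncomputable def srad (h k B : ℕ) (t : ℝ) : ℂ :=
  Complex.exp (Real.pi * Complex.I * ((h : ℝ) * B / k)) * Real.exp (-(t * B / 2))

/-- The Appell–Lerch sum `m(X,q,z)`. -/
noncomputable def appellM (X q z : ℂ) : ℂ :=
  (1 / jac z q) * ∑' n : ℤ, (-z) ^ n * q ^ ((n * (n - 1)) / 2) / (1 - X * z * q ^ (n - 1))

lemma e2pi_add (r s : ℝ) : e2pi (r + s) = e2pi r * e2pi s := by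
  simp only [e2pi, ← Complex.exp_add]; push_cast; ring_nf

lemma e2pi_zpow (r : ℝ) (m : ℤ) : e2pi r ^ m = e2pi (m * r) := by
  simp only [e2pi, ← Complex.exp_int_mul]; push_cast; ring_nf

lemma e2pi_ne_zero (r : ℝ) : e2pi r ≠ 0 := Complex.exp_ne_zero _

lemma e2pi_eq_one_iff (r : ℝ) : e2pi r = 1 ↔ ∃ n : ℤ, r = n := by
  rw [e2pi, Complex.exp_eq_one_iff]
  refine exists_congr fun n => ?_
  rw [mul_comm (n : ℂ), mul_right_inj' (by simp [Real.pi_ne_zero])]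
  exact_mod_cast Iff.rfl

lemma qPoch_eq_zero_iff (a q : ℂ) (n : ℕ) : qPoch a q n = 0 ↔ ∃ j < n, a * q ^ j = 1 := by
  rw [qPoch, Finset.prod_eq_zero_iff]
  simp only [Finset.mem_range, sub_eq_zero, eq_comm (a := (1 : ℂ))]

lemma exists_qPoch_mul_qPoch_div_eq_zero_iff {x q : ℂ} (hx : x ≠ 0) (hq : q ≠ 0) :
    (∃ n, 1 ≤ n ∧ qPoch x q n * qPoch (q / x) q n = 0) ↔ ∃ m : ℤ, x * q ^ m = 1 := by
  have hdual (j : ℕ) : q / x * q ^ j = 1 ↔ x * q ^ Int.negSucc j = 1 := by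
    rw [zpow_negSucc, mul_inv_eq_one₀ (pow_ne_zero _ hq), div_mul_eq_mul_div, ← pow_succ',
      div_eq_one_iff_eq hx, eq_comm]
  simp only [mul_eq_zero, qPoch_eq_zero_iff]
  constructor
  · rintro ⟨n, -, ⟨j, -, hj⟩ | ⟨j, -, hj⟩⟩
    · exact ⟨j, by simpa using hj⟩
    · exact ⟨_, (hdual j).mp hj⟩
  · rintro ⟨m | j, hm⟩
    · exact ⟨m + 1, by omega, .inl ⟨m, by omega, by simpa using hm⟩⟩
    · exact ⟨j + 1, by omega, .inr ⟨j, by omega, (hdual j).mpr hm⟩⟩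

lemma exists_intCast_eq_div_add_div_iff {a b k : ℕ} (X : ℤ) (hb : 0 < b) (hk : 0 < k)
    (hab : a.Coprime b) :
    (∃ n : ℤ, (a : ℝ) / b + X / k = n) ↔ b ∣ k ∧ (k : ℤ) ∣ a * (k / b : ℕ) + X := by
  have hb' : (b : ℝ) ≠ 0 := by positivity
  constructor
  · rintro ⟨n, hn⟩
    have hint : (a * k + b * X : ℤ) = n * b * k := by
      have hR : (a * k + b * X : ℝ) = n * b * k := by
        field_simp at hn
        linear_combination hn
      exact_mod_cast hR
    have hbk : b ∣ k := by
      refine hab.symm.dvd_of_dvd_mul_left (Int.natCast_dvd_natCast.mp ⟨n * k - X, ?_⟩)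
      push_cast
      linear_combination hint
    obtain ⟨k', rfl⟩ := hbk
    refine ⟨dvd_mul_right b k', n, ?_⟩
    rw [Nat.mul_div_cancel_left k' hb]
    have hb0 : (b : ℤ) ≠ 0 := by exact_mod_cast hb.ne'
    apply mul_left_cancel₀ hb0
    push_cast at hint ⊢
    linear_combination hint
  · rintro ⟨⟨k', rfl⟩, t, ht⟩
    rw [Nat.mul_div_cancel_left k' hb] at ht
    refine ⟨t, ?_⟩
    have hk' : (k' : ℝ) ≠ 0 := by
      have : 0 < k' := Nat.pos_of_mul_pos_left hk
      positivity
    have htR : (a * k' + X : ℝ) = b * k' * t := by exact_mod_cast ht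
    calc (a : ℝ) / b + X / ((b * k' : ℕ) : ℝ) = (a * k' + X) / (b * k') := by
          push_cast; field_simp
      _ = t := by rw [htR]; field_simp

lemma exists_natCast_dvd_add_mul_iff (k d c : ℕ) :
    (∃ m : ℤ, (k : ℤ) ∣ c + m * d) ↔ k.gcd d ∣ c := by
  rw [← Int.gcd_natCast_natCast, Int.gcd_dvd_iff]
  constructor
  · rintro ⟨m, x, hx⟩
    exact ⟨x, -m, by linear_combination hx⟩
  · rintro ⟨x, y, hxy⟩
    exact ⟨-y, x, by linear_combination hxy⟩

lemma exists_div_add_mul_div_eq_intCast_iff {a b A B h k : ℕ} (hb : 0 < b) (hk : 0 < k)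
    (hab : a.Coprime b) (hhk : h.Coprime k) :
    (∃ m n : ℤ, (a : ℝ) / b + h * A / k + m * (h * B / k) = n) ↔
      b ∣ k ∧ k.gcd B ∣ a * k / b + A * h := by
  calc (∃ m n : ℤ, (a : ℝ) / b + h * A / k + m * (h * B / k) = n)
      ↔ ∃ m : ℤ, b ∣ k ∧ (k : ℤ) ∣ a * (k / b : ℕ) + ((h * A : ℕ) + m * (h * B : ℕ)) :=
        exists_congr fun m => by
          rw [← exists_intCast_eq_div_add_div_iff _ hb hk hab]
          refine exists_congr fun n => ?_
          push_cast
          ring_nf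
    _ ↔ b ∣ k ∧ ∃ m : ℤ, (k : ℤ) ∣ (a * (k / b) + A * h : ℕ) + m * (h * B : ℕ) := by
        simp only [exists_and_left, Nat.cast_add, Nat.cast_mul, add_assoc, mul_comm (A : ℤ)]
    _ ↔ b ∣ k ∧ k.gcd B ∣ a * k / b + A * h := by
        rw [exists_natCast_dvd_add_mul_iff, hhk.gcd_mul_left_cancel_right]
        exact and_congr_right fun hbk => by rw [Nat.mul_div_assoc _ hbk]

theorem stmt8_general (a b A B : ℕ) (hb : 0 < b) (hab : Nat.gcd a b = 1)
    (h k : ℕ) (hk : 0 < k) (hhk : Nat.gcd h k = 1) :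
    (∃ n : ℕ, 1 ≤ n ∧
        qPoch (e2pi ((a : ℝ) / b) * e2pi ((h : ℝ) * A / k)) (e2pi ((h : ℝ) * B / k)) n
          * qPoch (e2pi (-((a : ℝ) / b)) * e2pi ((h : ℝ) * ((B : ℝ) - A) / k))
              (e2pi ((h : ℝ) * B / k)) n = 0)
      ↔ (b ∣ k ∧ Nat.gcd k B ∣ (a * k / b + A * h)) := by
  have hbase : e2pi (-((a : ℝ) / b)) * e2pi ((h : ℝ) * ((B : ℝ) - A) / k) =
      e2pi ((h : ℝ) * B / k) / (e2pi ((a : ℝ) / b) * e2pi ((h : ℝ) * A / k)) := by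
    rw [eq_div_iff (mul_ne_zero (e2pi_ne_zero _) (e2pi_ne_zero _)), ← e2pi_add, ← e2pi_add,
      ← e2pi_add]
    ring_nf
  rw [hbase, exists_qPoch_mul_qPoch_div_eq_zero_iff (mul_ne_zero (e2pi_ne_zero _)
    (e2pi_ne_zero _)) (e2pi_ne_zero _), ← exists_div_add_mul_div_eq_intCast_iff hb hk hab hhk]
  simp only [e2pi_zpow, ← e2pi_add, e2pi_eq_one_iff]

theorem stmt8 (a b A B : ℕ) (hb : 0 < b) (hBpos : 0 < B) (hab : Nat.gcd a b = 1)
    (hbBA : 1 < b ∨ ¬ B ∣ A)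
    (h k : ℕ) (hk : 0 < k) (hhk : Nat.gcd h k = 1) :
    (∃ n : ℕ, 1 ≤ n ∧
        qPoch (e2pi ((a : ℝ) / b) * e2pi ((h : ℝ) * A / k)) (e2pi ((h : ℝ) * B / k)) n
          * qPoch (e2pi (-((a : ℝ) / b)) * e2pi ((h : ℝ) * ((B : ℝ) - A) / k))
              (e2pi ((h : ℝ) * B / k)) n = 0)
      ↔ (b ∣ k ∧ Nat.gcd k B ∣ (a * k / b + A * h)) :=
  stmt8_general a b A B hb hab h k hk hhk
end

section
/- Let q ∈ ℂ with 0 < |q| < 1 and let x ∈ ℂ \ {0} with x ∉ {q^m : m ∈ ℤ}. Then g₃(x^{−1}, q) = g₃(xq, q) = −x³ g₃(x,q) − x² − x. -/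
open Complex Filter Finset

/-!
The first identity is the symmetry `x ↔ q / x` of the summands of `g₃` (applied to `x⁻¹`).

For the second, write `P n = (x;q)_n`, `Q n = (q/x;q)_n` and
`C n = x (x² - 1) q^{n(n+1)} / (P (n+1) Q n)`. Using `(xq;q)_{n+1} = P (n+2) / (1 - x)` and
`(x⁻¹;q)_{n+1} = (1 - x⁻¹) Q n`, the `n`-th summands satisfy
`g₃ₙ(xq) + x³ g₃ₙ(x) = C n - C (n+1)`, a rational identity in `x`, `q^{n+1}`, `P (n+1)`, `Q n`.
Summing telescopes to `C 0 = -x² - x`. All series converge absolutely because the partial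
products `(a;q)_n` tend to the nonzero limit `(a;q)_∞`, so their inverses are bounded.
-/

open Topology

section QPochhammer

variable {a q : ℂ}

lemma qPoch_zero : qPoch a q 0 = 1 := prod_range_zero _

lemma qPoch_succ (n : ℕ) : qPoch a q (n + 1) = qPoch a q n * (1 - a * q ^ n) :=
  prod_range_succ _ _

lemma qPoch_succ' (n : ℕ) : qPoch a q (n + 1) = (1 - a) * qPoch (a * q) q n := by
  simp only [qPoch, prod_range_succ', pow_zero, mul_one, pow_succ, mul_assoc, mul_comm]

lemma qPoch_ne_zero (ha : ∀ j, 1 - a * q ^ j ≠ 0) (n : ℕ) : qPoch a q n ≠ 0 :=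
  prod_ne_zero_iff.2 fun j _ => ha j

lemma summable_norm_neg_mul_pow (hq : ‖q‖ < 1) : Summable fun j : ℕ => ‖-(a * q ^ j)‖ := by
  simpa [norm_mul, norm_pow] using
    (summable_geometric_of_lt_one (norm_nonneg q) hq).mul_left ‖a‖

lemma tendsto_qPoch (hq : ‖q‖ < 1) : Tendsto (qPoch a q) atTop (𝓝 (qPochInf a q)) := by
  have h := (multipliable_one_add_of_summable (summable_norm_neg_mul_pow (a := a) hq)).hasProd
  simp only [← sub_eq_add_neg] at h
  exact h.tendsto_prod_nat

lemma qPochInf_ne_zero (hq : ‖q‖ < 1) (ha : ∀ j, 1 - a * q ^ j ≠ 0) : qPochInf a q ≠ 0 := by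
  have h := tprod_one_add_ne_zero_of_summable (f := fun j => -(a * q ^ j))
    (by simpa only [← sub_eq_add_neg] using ha) (summable_norm_neg_mul_pow hq)
  simpa only [← sub_eq_add_neg, qPochInf] using h

lemma exists_norm_inv_qPoch_le (hq : ‖q‖ < 1) (ha : ∀ j, 1 - a * q ^ j ≠ 0) :
    ∃ M, ∀ n, ‖(qPoch a q n)⁻¹‖ ≤ M := by
  have h := (tendsto_qPoch hq).inv₀ (qPochInf_ne_zero hq ha)
  obtain ⟨M, hM⟩ := isBounded_iff_forall_norm_le.1 (Metric.isBounded_range_of_tendsto _ h)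
  exact ⟨M, fun n => hM _ ⟨n, rfl⟩⟩

end QPochhammer

lemma summable_pow_mul_of_norm_le {𝕜 : Type*} [NormedField 𝕜] [CompleteSpace 𝕜] {q : 𝕜}
    (hq : ‖q‖ < 1) {u : ℕ → 𝕜} {M : ℝ} (hu : ∀ n, ‖u n‖ ≤ M) :
    Summable fun n => q ^ (n * (n + 1)) * u n := by
  refine Summable.of_norm_bounded ((summable_geometric_of_lt_one (norm_nonneg q) hq).mul_left M)
    fun n => ?_
  rw [norm_mul, norm_pow, mul_comm M]
  have hexp : n ≤ n * (n + 1) := Nat.le_mul_of_pos_right n n.succ_pos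
  exact mul_le_mul (pow_le_pow_of_le_one (norm_nonneg q) hq.le hexp) (hu n) (norm_nonneg _)
    (by positivity)

lemma summable_pow_div_qPoch_mul_qPoch {a b q : ℂ} (hq : ‖q‖ < 1)
    (ha : ∀ j, 1 - a * q ^ j ≠ 0) (hb : ∀ j, 1 - b * q ^ j ≠ 0) (k l : ℕ) :
    Summable fun n => q ^ (n * (n + 1)) / (qPoch a q (n + k) * qPoch b q (n + l)) := by
  obtain ⟨Ma, hMa⟩ := exists_norm_inv_qPoch_le hq ha
  obtain ⟨Mb, hMb⟩ := exists_norm_inv_qPoch_le hq hb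
  have hbound : ∀ n, ‖(qPoch a q (n + k))⁻¹ * (qPoch b q (n + l))⁻¹‖ ≤ Ma * Mb := fun n => by
    rw [norm_mul]
    exact mul_le_mul (hMa _) (hMb _) (norm_nonneg _) ((norm_nonneg _).trans (hMa 0))
  simpa only [div_eq_mul_inv, mul_inv] using summable_pow_mul_of_norm_le hq hbound

lemma hasSum_sub_succ {G : Type*} [AddCommGroup G] [TopologicalSpace G] [IsTopologicalAddGroup G]
    {f : ℕ → G} (hf : Summable f) : HasSum (fun n => f n - f (n + 1)) (f 0) := by
  have h := hf.hasSum.sub ((hasSum_nat_add_iff' 1).2 hf.hasSum)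
  simpa using h

noncomputable def g₃Term (x q : ℂ) (n : ℕ) : ℂ :=
  q ^ (n * (n + 1)) / (qPoch x q (n + 1) * qPoch (q / x) q (n + 1))

noncomputable def g₃Telescoping (x q : ℂ) (n : ℕ) : ℂ :=
  x * (x ^ 2 - 1) * q ^ (n * (n + 1)) / (qPoch x q (n + 1) * qPoch (q / x) q n)

section UniversalMockTheta

variable {x q : ℂ}

lemma g₃_div_left (hq : q ≠ 0) : g₃ (q / x) q = g₃ x q := by
  simp only [g₃, div_div_cancel₀ hq, mul_comm (qPoch (q / x) q _)]

lemma one_sub_mul_pow_ne_zero (hxq : ∀ m : ℤ, x ≠ q ^ m) (j : ℕ) : 1 - x * q ^ j ≠ 0 := by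
  intro h
  apply hxq (-j)
  rw [zpow_neg, zpow_natCast]
  exact eq_inv_of_mul_eq_one_left (by linear_combination -h)

lemma one_sub_div_mul_pow_ne_zero (hxq : ∀ m : ℤ, x ≠ q ^ m) (j : ℕ) : 1 - q / x * q ^ j ≠ 0 := by
  intro h
  have hx : x ≠ 0 := by
    rintro rfl
    simp at h
  apply hxq (j + 1 : ℕ)
  rw [zpow_natCast, pow_succ]
  field_simp at h
  linear_combination h

lemma g₃Term_mul_add (hx : x ≠ 0) (hq : q ≠ 0) (h₁ : ∀ j, 1 - x * q ^ j ≠ 0)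
    (h₂ : ∀ j, 1 - q / x * q ^ j ≠ 0) (n : ℕ) :
    g₃Term (x * q) q n + x ^ 3 * g₃Term x q n =
      g₃Telescoping x q n - g₃Telescoping x q (n + 1) := by
  have hP := qPoch_ne_zero h₁ (n + 1)
  have hQ := qPoch_ne_zero h₂ n
  have hu := h₁ (n + 1)
  have hv := h₂ n
  have h1x : 1 - x ≠ 0 := by simpa using h₁ 0
  have hshift :
      qPoch (x * q) q (n + 1) = qPoch x q (n + 1) * (1 - x * q ^ (n + 1)) / (1 - x) := by
    rw [eq_div_iff h1x, ← qPoch_succ, qPoch_succ' (a := x) (n := n + 1), mul_comm]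
  have hinv : qPoch (q / (x * q)) q (n + 1) = (1 - x⁻¹) * qPoch (q / x) q n := by
    rw [div_mul_cancel_right₀ hq, qPoch_succ', inv_mul_eq_div]
  have hexp : q ^ ((n + 1) * (n + 1 + 1)) = q ^ (n * (n + 1)) * (q ^ (n + 1)) ^ 2 := by
    rw [← pow_mul, ← pow_add]; ring_nf
  have hqx : q / x * q ^ n = q ^ (n + 1) / x := by ring
  simp only [g₃Term, g₃Telescoping, hshift, hinv, qPoch_succ (a := x) (n := n + 1),
    qPoch_succ (a := q / x) (n := n), hexp, hqx] at hv ⊢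
  generalize qPoch x q (n + 1) = P at *
  generalize qPoch (q / x) q n = Q at *
  generalize q ^ (n + 1) = s at *
  generalize q ^ (n * (n + 1)) = t
  have hv' : x - s ≠ 0 := fun h => hv (by field_simp; linear_combination h)
  have hx' : x - 1 ≠ 0 := fun h => h1x (by linear_combination -h)
  field_simp
  ring

lemma g₃Telescoping_zero (h : x ≠ 1) : g₃Telescoping x q 0 = -x ^ 2 - x := by
  have h1x : 1 - x ≠ 0 := sub_ne_zero.2 h.symm
  simp only [g₃Telescoping, zero_add, pow_zero, qPoch_succ, qPoch_zero]
  field_simp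
  ring

lemma summable_g₃Term (hq1 : ‖q‖ < 1) (h₁ : ∀ j, 1 - x * q ^ j ≠ 0)
    (h₂ : ∀ j, 1 - q / x * q ^ j ≠ 0) : Summable (g₃Term x q) :=
  summable_pow_div_qPoch_mul_qPoch hq1 h₁ h₂ 1 1

lemma summable_g₃Telescoping (hq1 : ‖q‖ < 1) (h₁ : ∀ j, 1 - x * q ^ j ≠ 0)
    (h₂ : ∀ j, 1 - q / x * q ^ j ≠ 0) : Summable (g₃Telescoping x q) := by
  refine ((summable_pow_div_qPoch_mul_qPoch hq1 h₁ h₂ 1 0).mul_left (x * (x ^ 2 - 1))).congr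
    fun n => ?_
  exact (mul_div_assoc _ _ _).symm

lemma hasSum_g₃Term_mul (hx : x ≠ 0) (hq : q ≠ 0) (hq1 : ‖q‖ < 1)
    (hxq : ∀ m : ℤ, x ≠ q ^ m) :
    HasSum (g₃Term (x * q) q) (-x ^ 3 * g₃ x q - x ^ 2 - x) := by
  have h₁ := one_sub_mul_pow_ne_zero hxq
  have h₂ := one_sub_div_mul_pow_ne_zero hxq
  have h := (hasSum_sub_succ (summable_g₃Telescoping hq1 h₁ h₂)).sub
    ((summable_g₃Term hq1 h₁ h₂).hasSum.mul_left (x ^ 3))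
  have hterm : (fun n => g₃Telescoping x q n - g₃Telescoping x q (n + 1) - x ^ 3 * g₃Term x q n)
      = g₃Term (x * q) q :=
    funext fun n => by rw [← g₃Term_mul_add hx hq h₁ h₂]; ring
  have hg₃ : ∑' n, g₃Term x q n = g₃ x q := rfl
  rw [hterm, hg₃, g₃Telescoping_zero (by simpa using hxq 0)] at h
  rwa [show -x ^ 2 - x - x ^ 3 * g₃ x q = -x ^ 3 * g₃ x q - x ^ 2 - x by ring] at h

end UniversalMockTheta

theorem stmt12 (q x : ℂ) (hq0 : 0 < ‖q‖) (hq1 : ‖q‖ < 1)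
    (hx : x ≠ 0) (hxq : ∀ m : ℤ, x ≠ q ^ m) :
    g₃ x⁻¹ q = g₃ (x * q) q ∧ g₃ (x * q) q = -x ^ 3 * g₃ x q - x ^ 2 - x := by
  have hq : q ≠ 0 := norm_pos_iff.1 hq0
  constructor
  · rw [← g₃_div_left hq, div_inv_eq_mul, mul_comm]
  · exact (hasSum_g₃Term_mul hx hq hq1 hxq).tsum_eq
end

section
/- Let K ≥ 1, let q be a primitive K-th root of unity, and let x be a root of unity such that (x;q)_n (q/x;q)_n ≠ 0 for all n ≥ 1. Then the series ∑_{n=1}^{∞} q^{n(n−1)} / ( (x;q)_n (q/x;q)_n ) converges absolutely if and only if Re(x^K) < 1/2, and in that case its sum equals [1/(1 − 1/((1 − x^K)(1 − x^{−K})))] · ∑_{j=1}^{K} q^{j(j−1)} / ( (x;q)_j (q/x;q)_j ). -/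
/-!
Since `q` has order `K`, one period of the `q`-Pochhammer symbol collapses:
`(a;q)_{n+K} = (a;q)_n (1 - a^K)`, while `q^{n(n+1)}` is `K`-periodic. Hence the summands `a_n` of
`g₃` satisfy `a_{n+K} = c a_n` with `c = ((1 - x^K)(1 - x^{-K}))⁻¹`, and the series is a geometric
series in blocks of length `K`. For `|x| = 1` the product `(1 - x^K)(1 - x^{-K})` is the real
number `2 - 2 Re(x^K)`, so `|c| < 1` exactly when `Re(x^K) < 1/2`.
-/

open Complex Filter Finset

section QuasiPeriodic

variable {𝕜 : Type*} [NormedField 𝕜] {f : ℕ → 𝕜} {K : ℕ} {c : 𝕜}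

lemma apply_add_mul_eq_mul_pow (hf : ∀ n, f (n + K) = f n * c) (j m : ℕ) :
    f (j + m * K) = f j * c ^ m := by
  induction m with
  | zero => simp
  | succ m ih => rw [add_one_mul, ← add_assoc, hf, ih, pow_succ, mul_assoc]

lemma summable_norm_of_apply_add_eq_mul (hK : 0 < K) (hf : ∀ n, f (n + K) = f n * c)
    (hc : ‖c‖ < 1) : Summable fun n => ‖f n‖ := by
  have : NeZero K := ⟨hK.ne'⟩
  have hblock : (fun n => ‖f n‖) ∘ (Nat.divModEquiv K).symm =
      fun p : ℕ × Fin K => ‖c‖ ^ p.1 * ‖f p.2‖ := funext fun p => by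
    simp only [Function.comp_apply, Nat.divModEquiv_symm_apply]
    rw [add_comm, apply_add_mul_eq_mul_pow hf, norm_mul, norm_pow, mul_comm]
  rw [← (Nat.divModEquiv K).symm.summable_iff, hblock]
  exact (summable_geometric_of_lt_one (norm_nonneg c) hc).mul_of_nonneg
    (g := fun j : Fin K => ‖f j‖) Summable.of_finite (fun _ => pow_nonneg (norm_nonneg c) _)
    (fun _ => norm_nonneg _)

lemma norm_lt_one_of_summable_norm (hK : 0 < K) (hf : ∀ n, f (n + K) = f n * c) (h0 : f 0 ≠ 0)
    (hs : Summable fun n => ‖f n‖) : ‖c‖ < 1 := by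
  have hsub : Summable fun m => ‖f 0‖ * ‖c‖ ^ m := by
    refine (hs.comp_injective (mul_left_injective₀ hK.ne')).congr fun m => ?_
    simp [← norm_pow, ← norm_mul, ← apply_add_mul_eq_mul_pow hf]
  rw [summable_mul_left_iff (norm_ne_zero_iff.2 h0)] at hsub
  simpa using summable_geometric_iff_norm_lt_one.1 hsub

lemma tsum_eq_sum_range_mul_inv (hf : ∀ n, f (n + K) = f n * c) (hs : Summable f)
    (hc : c ≠ 1) : ∑' n, f n = (∑ j ∈ range K, f j) * (1 - c)⁻¹ := by
  have h := hs.sum_add_tsum_nat_add K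
  simp only [hf, tsum_mul_right] at h
  rw [eq_mul_inv_iff_mul_eq₀ (sub_ne_zero.2 hc.symm)]
  linear_combination -h

end QuasiPeriodic

lemma qPoch_add (a q : ℂ) (m n : ℕ) :
    qPoch a q (m + n) = qPoch a q m * qPoch (a * q ^ m) q n := by
  simp only [qPoch, prod_range_add, pow_add, mul_assoc]

section PrimitiveRoot

variable {q : ℂ} {K : ℕ}

lemma qPoch_of_isPrimitiveRoot (hq : IsPrimitiveRoot q K) (hK : 0 < K) (a : ℂ) :
    qPoch a q K = 1 - a ^ K := by
  have h := congrArg (Polynomial.eval 1) (X_pow_sub_C_eq_prod hq hK (rfl : a ^ K = a ^ K))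
  simp only [Polynomial.eval_sub, Polynomial.eval_pow, Polynomial.eval_X, Polynomial.eval_C,
    one_pow, Polynomial.eval_prod] at h
  simp only [h, qPoch, mul_comm a]

lemma qPoch_add_period (hq : IsPrimitiveRoot q K) (hK : 0 < K) (a : ℂ) (m : ℕ) :
    qPoch a q (m + K) = qPoch a q m * (1 - a ^ K) := by
  rw [qPoch_add, qPoch_of_isPrimitiveRoot hq hK, mul_pow, ← pow_mul, mul_comm m K, pow_mul,
    hq.pow_eq_one, one_pow, mul_one]

lemma div_pow_of_isPrimitiveRoot (hq : IsPrimitiveRoot q K) (x : ℂ) :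
    (q / x) ^ K = (x ^ K)⁻¹ := by
  rw [div_pow, hq.pow_eq_one, one_div]

end PrimitiveRoot

noncomputable def g₃Summand (x q : ℂ) (n : ℕ) : ℂ :=
  q ^ (n * (n + 1)) / (qPoch x q (n + 1) * qPoch (q / x) q (n + 1))

lemma g₃Summand_add_period {q : ℂ} {K : ℕ} (hq : IsPrimitiveRoot q K) (hK : 0 < K) (x : ℂ)
    (n : ℕ) :
    g₃Summand x q (n + K) = g₃Summand x q n * ((1 - x ^ K) * (1 - (x ^ K)⁻¹))⁻¹ := by
  have hnum : q ^ ((n + K) * (n + K + 1)) = q ^ (n * (n + 1)) := by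
    rw [show (n + K) * (n + K + 1) = n * (n + 1) + K * (2 * n + K + 1) by ring, pow_add,
      pow_mul q K, hq.pow_eq_one, one_pow, mul_one]
  rw [g₃Summand, g₃Summand, hnum, add_right_comm n K 1, qPoch_add_period hq hK,
    qPoch_add_period hq hK, div_pow_of_isPrimitiveRoot hq]
  simp only [div_eq_mul_inv, mul_inv]
  ring

lemma sum_range_g₃Summand (x q : ℂ) (K : ℕ) :
    ∑ j ∈ range K, g₃Summand x q j =
      ∑ j ∈ Icc 1 K, q ^ (j * (j - 1)) / (qPoch x q j * qPoch (q / x) q j) := by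
  rw [← Ico_add_one_right_eq_Icc, sum_Ico_eq_sum_range, Nat.add_sub_cancel]
  exact sum_congr rfl fun j _ => by rw [g₃Summand, add_comm 1 j, Nat.add_sub_cancel, mul_comm]

section UnitCircle

variable {w : ℂ}

lemma one_sub_mul_one_sub_inv_of_norm_eq_one (hw : ‖w‖ = 1) :
    (1 - w) * (1 - w⁻¹) = ((2 - 2 * w.re : ℝ) : ℂ) := by
  have hconj : w * starRingEnd ℂ w = 1 := by
    rw [mul_conj, normSq_eq_norm_sq, hw]; norm_num
  have hsum := add_conj w
  rw [inv_eq_conj hw]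
  push_cast at hsum ⊢
  linear_combination hconj - hsum

lemma norm_inv_one_sub_mul_one_sub_inv_lt_one_iff (hw : ‖w‖ = 1)
    (h : (1 - w) * (1 - w⁻¹) ≠ 0) : ‖((1 - w) * (1 - w⁻¹))⁻¹‖ < 1 ↔ w.re < 1 / 2 := by
  rw [one_sub_mul_one_sub_inv_of_norm_eq_one hw] at h ⊢
  have hre : w.re ≤ 1 := hw ▸ re_le_norm w
  have hpos : 0 < 2 - 2 * w.re :=
    lt_of_le_of_ne (by linarith) (fun h0 => h (by rw [← h0, ofReal_zero]))
  rw [norm_inv, norm_real, Real.norm_of_nonneg hpos.le, inv_lt_one₀ hpos]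
  constructor <;> intro <;> linarith

end UnitCircle

theorem stmt13 (K : ℕ) (hK : 1 ≤ K) (q x : ℂ) (hq : IsPrimitiveRoot q K)
    (hx : ∃ n : ℕ, 0 < n ∧ x ^ n = 1)
    (hden : ∀ n : ℕ, 1 ≤ n → qPoch x q n * qPoch (q / x) q n ≠ 0) :
    ((Summable fun n : ℕ =>
        ‖q ^ (n * (n + 1)) / (qPoch x q (n + 1) * qPoch (q / x) q (n + 1))‖)
      ↔ (x ^ K).re < 1 / 2) ∧
    ((x ^ K).re < 1 / 2 →
      g₃ x q = (1 / (1 - 1 / ((1 - x ^ K) * (1 - x⁻¹ ^ K))))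
        * ∑ j ∈ Finset.Icc 1 K, q ^ (j * (j - 1)) / (qPoch x q j * qPoch (q / x) q j)) := by
  obtain ⟨N, hN, hxN⟩ := hx
  have hxK : ‖x ^ K‖ = 1 := by rw [norm_pow, norm_eq_one_of_pow_eq_one hxN hN.ne', one_pow]
  have hperiod := g₃Summand_add_period hq hK x
  have hfactor : (1 - x ^ K) * (1 - (x ^ K)⁻¹) ≠ 0 := by
    simpa only [qPoch_of_isPrimitiveRoot hq hK, div_pow_of_isPrimitiveRoot hq] using hden K hK
  have hc := norm_inv_one_sub_mul_one_sub_inv_lt_one_iff hxK hfactor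
  have h0 : g₃Summand x q 0 ≠ 0 := by
    rw [g₃Summand, zero_mul, pow_zero]
    exact div_ne_zero one_ne_zero (hden 1 le_rfl)
  have hsumm : (Summable fun n => ‖g₃Summand x q n‖) ↔ (x ^ K).re < 1 / 2 :=
    Iff.trans ⟨norm_lt_one_of_summable_norm hK hperiod h0,
      summable_norm_of_apply_add_eq_mul hK hperiod⟩ hc
  refine ⟨hsumm, fun hre => ?_⟩
  have hc1 : ((1 - x ^ K) * (1 - (x ^ K)⁻¹))⁻¹ ≠ 1 := fun h1 => by
    simpa [h1] using hc.2 hre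
  change ∑' n, g₃Summand x q n = _
  rw [tsum_eq_sum_range_mul_inv hperiod (hsumm.2 hre).of_norm hc1, sum_range_g₃Summand,
    mul_comm, one_div, one_div, inv_pow]
end

section
/- Let k be a positive integer and write ζ_m = e^{2πi/m}. Then the series g₃(ζ_{2k}, ζ_k) = ∑_{n=1}^{∞} ζ_k^{n(n−1)} / ( (ζ_{2k}; ζ_k)_n )² converges absolutely and equals (4/3) ∑_{j=1}^{k} ζ_k^{j(j−1)} / ( (ζ_{2k}; ζ_k)_j )². -/
open Complex Filter Finset

/-!
Write `q = ζ_k` and `x = ζ_{2k}`, so that `q / x = x`, `x ^ k = -1` and `q` is a primitive `k`-th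
root of unity. Then `∏_{j<k} (1 - a q^j) = 1 - a^k` gives `(x;q)_{n+k} = 2 (x;q)_n`, while
`q^{n(n+1)}` is `k`-periodic in `n`; hence the `n`-th term of `g₃(x,q)` gets multiplied by `1/4`
when `n` is shifted by `k`. The series is therefore a geometric series of ratio `1/4` over blocks
of length `k`, and sums to `(1 - 1/4)⁻¹ = 4/3` times its first block.
-/

section ShiftRecurrence

variable {k : ℕ}

theorem sum_range_add_of_shift_eq_mul {R : Type*} [NonUnitalNonAssocSemiring R] {f : ℕ → R}
    {c : R} (hf : ∀ n, f (n + k) = c * f n) (n : ℕ) :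
    ∑ i ∈ range (k + n), f i = ∑ i ∈ range k, f i + c * ∑ i ∈ range n, f i := by
  rw [sum_range_add, mul_sum]
  exact congrArg _ (sum_congr rfl fun i _ => by rw [add_comm, hf])

theorem summable_of_shift_eq_mul {g : ℕ → ℝ} {ρ : ℝ} (hg : ∀ n, 0 ≤ g n) (hρ : ρ < 1)
    (hshift : ∀ n, g (n + k) = ρ * g n) : Summable g := by
  refine summable_of_sum_range_le hg (c := (∑ i ∈ range k, g i) / (1 - ρ)) fun n => ?_
  rw [le_div_iff₀ (by linarith)]
  have hmono : ∑ i ∈ range n, g i ≤ ∑ i ∈ range (k + n), g i :=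
    sum_le_sum_of_subset_of_nonneg (range_subset_range.2 (by omega)) fun i _ _ => hg i
  rw [sum_range_add_of_shift_eq_mul hshift] at hmono
  linarith

variable {𝕜 : Type*} [NormedField 𝕜] {f : ℕ → 𝕜} {c : 𝕜}

theorem summable_norm_of_shift_eq_mul (hc : ‖c‖ < 1) (hf : ∀ n, f (n + k) = c * f n) :
    Summable fun n => ‖f n‖ :=
  summable_of_shift_eq_mul (fun _ => norm_nonneg _) hc fun n => by rw [hf, norm_mul]

theorem tsum_eq_of_shift_eq_mul [CompleteSpace 𝕜] (hc : ‖c‖ < 1)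
    (hf : ∀ n, f (n + k) = c * f n) :
    ∑' n, f n = (1 - c)⁻¹ * ∑ i ∈ range k, f i := by
  have hc1 : 1 - c ≠ 0 := sub_ne_zero.2 fun h => by simp [← h] at hc
  have hsplit := (summable_norm_of_shift_eq_mul hc hf).of_norm.sum_add_tsum_nat_add k
  simp only [hf, tsum_mul_left] at hsplit
  rw [eq_inv_mul_iff_mul_eq₀ hc1]
  linear_combination -hsplit

end ShiftRecurrence

theorem IsPrimitiveRoot.prod_range_one_sub_mul_pow {R : Type*} [CommRing R] [IsDomain R]
    {q : R} {k : ℕ} (hq : IsPrimitiveRoot q k) (hk : 0 < k) (a : R) :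
    ∏ j ∈ range k, (1 - a * q ^ j) = 1 - a ^ k := by
  have h := congrArg (Polynomial.eval 1) (X_pow_sub_C_eq_prod hq hk (rfl : a ^ k = a ^ k))
  simp only [Polynomial.eval_sub, Polynomial.eval_pow, Polynomial.eval_X, Polynomial.eval_C,
    Polynomial.eval_prod, one_pow] at h
  rw [h]
  exact prod_congr rfl fun j _ => by ring

theorem qPoch_add_of_isPrimitiveRoot {a q : ℂ} {k : ℕ} (hq : IsPrimitiveRoot q k) (hk : 0 < k)
    (n : ℕ) : qPoch a q (n + k) = (1 - a ^ k) * qPoch a q n := by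
  rw [qPoch, prod_range_add, ← qPoch, mul_comm]
  congr 1
  calc ∏ j ∈ range k, (1 - a * q ^ (n + j)) = ∏ j ∈ range k, (1 - a * q ^ n * q ^ j) := by
        simp only [pow_add, mul_assoc]
    _ = 1 - (a * q ^ n) ^ k := hq.prod_range_one_sub_mul_pow hk _
    _ = 1 - a ^ k := by
        rw [mul_pow, ← pow_mul, mul_comm n, pow_mul, hq.pow_eq_one, one_pow, mul_one]

theorem g₃_term_add_of_isPrimitiveRoot {x q : ℂ} {k : ℕ} (hq : IsPrimitiveRoot q k) (hk : 0 < k)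
    (hx : x ^ k = -1) (n : ℕ) :
    q ^ ((n + k) * (n + k + 1)) / qPoch x q (n + k + 1) ^ 2
      = 4⁻¹ * (q ^ (n * (n + 1)) / qPoch x q (n + 1) ^ 2) := by
  have hpow : q ^ ((n + k) * (n + k + 1)) = q ^ (n * (n + 1)) := by
    rw [show (n + k) * (n + k + 1) = n * (n + 1) + k * (2 * n + k + 1) by ring, pow_add,
      pow_mul q k, hq.pow_eq_one, one_pow, mul_one]
  rw [hpow, show n + k + 1 = n + 1 + k by ring, qPoch_add_of_isPrimitiveRoot hq hk, hx]
  ring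

theorem e2pi_pow (r : ℝ) (n : ℕ) : e2pi r ^ n = e2pi (n * r) := by
  rw [e2pi, e2pi, ← Complex.exp_nat_mul]
  congr 1
  push_cast
  ring

theorem isPrimitiveRoot_e2pi_one_div {k : ℕ} (hk : k ≠ 0) :
    IsPrimitiveRoot (e2pi (1 / k)) k := by
  convert Complex.isPrimitiveRoot_exp k hk using 1
  rw [e2pi]
  push_cast
  rw [mul_one_div]

theorem e2pi_one_div_two_mul_sq (k : ℕ) : e2pi (1 / (2 * k)) ^ 2 = e2pi (1 / k) := by
  rw [e2pi_pow]
  congr 1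
  push_cast
  field_simp

theorem e2pi_one_div_two_mul_pow {k : ℕ} (hk : k ≠ 0) : e2pi (1 / (2 * k)) ^ k = -1 := by
  rw [e2pi_pow, e2pi, ← Complex.exp_pi_mul_I]
  congr 1
  field_simp
  push_cast
  ring

theorem sum_Icc_one_eq_sum_range {M : Type*} [AddCommMonoid M] (f : ℕ → M) (k : ℕ) :
    ∑ j ∈ Icc 1 k, f j = ∑ i ∈ range k, f (i + 1) := by
  rw [← Ico_add_one_right_eq_Icc, sum_Ico_eq_sum_range, Nat.add_sub_cancel]
  simp only [add_comm]

theorem stmt14 (k : ℕ) (hk : 0 < k) :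
    (Summable fun n : ℕ =>
        ‖e2pi (1 / (k : ℝ)) ^ (n * (n + 1))
          / (qPoch (e2pi (1 / (2 * (k : ℝ)))) (e2pi (1 / (k : ℝ))) (n + 1)) ^ 2‖) ∧
    g₃ (e2pi (1 / (2 * (k : ℝ)))) (e2pi (1 / (k : ℝ))) =
      (4 / 3) * ∑ j ∈ Finset.Icc 1 k,
        e2pi (1 / (k : ℝ)) ^ (j * (j - 1))
          / (qPoch (e2pi (1 / (2 * (k : ℝ)))) (e2pi (1 / (k : ℝ))) j) ^ 2 := by
  set q := e2pi (1 / (k : ℝ))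
  set x := e2pi (1 / (2 * (k : ℝ)))
  have hq : IsPrimitiveRoot q k := isPrimitiveRoot_e2pi_one_div hk.ne'
  have hqx : q / x = x := by
    rw [div_eq_iff (show x ≠ 0 from Complex.exp_ne_zero _), ← sq, e2pi_one_div_two_mul_sq]
  have hshift := g₃_term_add_of_isPrimitiveRoot hq hk (e2pi_one_div_two_mul_pow hk.ne')
  have hquarter : ‖(4⁻¹ : ℂ)‖ < 1 := by norm_num
  refine ⟨summable_norm_of_shift_eq_mul hquarter hshift, ?_⟩
  rw [g₃, hqx]
  simp only [← sq]
  rw [tsum_eq_of_shift_eq_mul hquarter hshift, sum_Icc_one_eq_sum_range]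
  congr 1
  · norm_num
  · exact sum_congr rfl fun i _ => by rw [Nat.add_sub_cancel, mul_comm]
end
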